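/- Every maximal element (under divisibility) of the monomial order ideal SFY of a finite bounded ranked poset P of rank n satisfies: if m = x_{p_k}^{ℓ} · m' is maximal, where p_k has rank k and all variables of m' correspond to elements strictly greater than p_k with deg m' = r, then ℓ = min(n - k - 2r, k - 1). -/

import Mathlib

/-
The first SFY constraint, at the least element `p` of the chain, bounds the exponent `ℓ` of `x_p`
in two ways: `ℓ < ρ p` (its gap to `0̂`), and `ℓ + 2 r ≤ n - ρ p`. If both bounds held strictly,
raising `ℓ` by one would still satisfy every constraint (the later ones do not involve `ℓ`), giving
an SFY monomial `m · x_p` and contradicting the maximality of `m`.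
-/

/-- The rank gap along a chain (with predecessor of the first element being `⊥`, of rank 0). -/
def gap {P : Type} [PartialOrder P] (ρ : P → ℕ) {s : ℕ} (f : Fin s → P) (i : Fin s) : ℕ :=
  ρ (f i) - (if (i : ℕ) = 0 then 0
    else ρ (f ⟨(i : ℕ) - 1, lt_of_le_of_lt (Nat.sub_le _ _) i.2⟩))

def mdeg {σ : Type} (m : σ →₀ ℕ) : ℕ := m.sum fun _ e => e

def IsSFY {P : Type} [PartialOrder P] [BoundedOrder P] (ρ : P → ℕ) (m : P →₀ ℕ) : Prop :=
  ∃ (s : ℕ) (f : Fin s → P) (ℓ : Fin s → ℕ),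
    (∀ i j : Fin s, i < j → f i < f j) ∧ (∀ i, (⊥ : P) < f i) ∧ (∀ i, f i < (⊤ : P)) ∧
    (∀ i, 1 ≤ ℓ i) ∧ (∀ i, ℓ i < gap ρ f i) ∧
    (∀ k : Fin s, (ℓ k : ℤ) + 2 * ∑ i ∈ Finset.univ.filter (fun j => k < j), (ℓ i : ℤ)
        ≤ (ρ ⊤ : ℤ) - (ρ (f k) : ℤ)) ∧
    m = ∑ i, Finsupp.single (f i) (ℓ i)

open Finset

theorem mdeg_sum_single {σ ι : Type} (s : Finset ι) (f : ι → σ) (ℓ : ι → ℕ) :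
    mdeg (∑ i ∈ s, Finsupp.single (f i) (ℓ i)) = ∑ i ∈ s, ℓ i := by
  rw [mdeg, ← Finsupp.sum_finsetSum_index (fun _ => rfl) (fun _ _ _ => rfl)]
  simp

section SumSingle

variable {σ ι : Type} [Fintype ι] {f : ι → σ} {ℓ : ι → ℕ}

theorem sum_single_apply_of_injective (hf : Function.Injective f) (j : ι) :
    (∑ i, Finsupp.single (f i) (ℓ i)) (f j) = ℓ j := by
  rw [Finsupp.finsetSum_apply, Finset.sum_eq_single j]
  · simp
  · exact fun i _ hij => Finsupp.single_eq_of_ne (hf.ne hij.symm)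
  · simp

theorem exists_eq_of_mem_support_sum_single {q : σ}
    (hq : q ∈ (∑ i, Finsupp.single (f i) (ℓ i)).support) : ∃ i, f i = q := by
  by_contra! hne
  refine Finsupp.mem_support_iff.mp hq ?_
  rw [Finsupp.finsetSum_apply]
  exact sum_eq_zero fun i _ => Finsupp.single_eq_of_ne (hne i).symm

end SumSingle

section Chain

variable {P : Type} [PartialOrder P] (ρ : P → ℕ) {t : ℕ} {f : Fin (t + 1) → P}
  {ℓ : Fin (t + 1) → ℕ}

theorem gap_zero : gap ρ f 0 = ρ (f 0) := by
  simp [gap]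

theorem head_eq_of_forall_lt (hf : StrictMono f) (hℓ : ∀ i, 1 ≤ ℓ i) {p : P}
    (hp : p ∈ (∑ i, Finsupp.single (f i) (ℓ i)).support)
    (hmin : ∀ q ∈ (∑ i, Finsupp.single (f i) (ℓ i)).support, q ≠ p → p < q) : f 0 = p := by
  obtain ⟨i, rfl⟩ := exists_eq_of_mem_support_sum_single hp
  by_contra hne
  have h0 : f 0 ∈ (∑ i, Finsupp.single (f i) (ℓ i)).support := by
    rw [Finsupp.mem_support_iff, sum_single_apply_of_injective hf.injective]
    exact Nat.one_le_iff_ne_zero.mp (hℓ 0)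
  exact (hf.monotone (Fin.zero_le i)).not_gt (hmin _ h0 hne)

theorem isSFY_add_single_head [BoundedOrder P] (hf : StrictMono f)
    (hbot : ∀ i, ⊥ < f i) (htop : ∀ i, f i < ⊤) (hℓ : ∀ i, 1 ≤ ℓ i)
    (hgap : ∀ i, ℓ i < gap ρ f i)
    (hsum : ∀ k : Fin (t + 1), (ℓ k : ℤ) + 2 * ∑ i ∈ univ.filter (fun j => k < j), (ℓ i : ℤ)
      ≤ (ρ ⊤ : ℤ) - (ρ (f k) : ℤ))
    (hgap0 : ℓ 0 + 1 < ρ (f 0))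
    (hsum0 : (ℓ 0 : ℤ) + 1 + 2 * ∑ i : Fin t, (ℓ i.succ : ℤ) ≤ (ρ ⊤ : ℤ) - (ρ (f 0) : ℤ)) :
    IsSFY ρ (∑ i, Finsupp.single (f i) (ℓ i) + Finsupp.single (f 0) 1) := by
  set ℓ' := Function.update ℓ 0 (ℓ 0 + 1)
  have hℓ'_zero : ℓ' 0 = ℓ 0 + 1 := Function.update_self ..
  have hℓ'_succ (i : Fin t) : ℓ' i.succ = ℓ i.succ := Function.update_of_ne i.succ_ne_zero _ _
  refine ⟨t + 1, f, ℓ', fun i j h => hf h, hbot, htop, ?_, ?_, ?_, ?_⟩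
  · refine Fin.cases ?_ fun i => ?_
    · simp [hℓ'_zero]
    · simpa [hℓ'_succ] using hℓ i.succ
  · refine Fin.cases ?_ fun i => ?_
    · rwa [hℓ'_zero, gap_zero]
    · simpa [hℓ'_succ] using hgap i.succ
  · refine Fin.cases ?_ fun k => ?_
    · rw [filter_lt_eq_Ioi, Fin.sum_Ioi_zero]
      simpa [hℓ'_zero, hℓ'_succ, add_right_comm _ (1 : ℤ)] using hsum0
    · have hfar : ∑ i ∈ univ.filter (fun j => k.succ < j), (ℓ' i : ℤ)
          = ∑ i ∈ univ.filter (fun j => k.succ < j), (ℓ i : ℤ) :=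
        sum_congr rfl fun j hj =>
          congrArg _ (Function.update_of_ne ((k.succ_pos.trans (mem_filter.mp hj).2).ne') _ _)
      simpa [hℓ'_succ, hfar] using hsum k.succ
  · rw [Fin.sum_univ_succ, Fin.sum_univ_succ, hℓ'_zero, Finsupp.single_add]
    simp only [hℓ'_succ]
    abel

end Chain

theorem stmt19_general {P : Type} [PartialOrder P] [BoundedOrder P]
    (n : ℕ) (ρ : P → ℕ)
    (htop : ρ ⊤ = n)
    (m : P →₀ ℕ) (hm : IsSFY ρ m)
    (hmax : ∀ m' : P →₀ ℕ, IsSFY ρ m' → m ≤ m' → m' = m)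
    (p : P) (hp : p ∈ m.support)
    (hmin : ∀ q ∈ m.support, q ≠ p → p < q) :
    (m p : ℤ) = min ((n : ℤ) - (ρ p : ℤ) - 2 * ((mdeg m : ℤ) - (m p : ℤ)))
      ((ρ p : ℤ) - 1) := by
  obtain ⟨s, f, ℓ, hf, hbot, hlt_top, hℓ, hgap, hsum, rfl⟩ := hm
  obtain ⟨i, rfl⟩ := exists_eq_of_mem_support_sum_single hp
  obtain ⟨t, rfl⟩ : ∃ t, s = t + 1 := Nat.exists_eq_succ_of_ne_zero i.pos.ne'
  replace hf : StrictMono f := fun i j h => hf i j h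
  rw [← head_eq_of_forall_lt hf hℓ hp hmin, sum_single_apply_of_injective hf.injective,
    mdeg_sum_single, Fin.sum_univ_succ]
  have hgap0 : ℓ 0 < ρ (f 0) := gap_zero ρ ▸ hgap 0
  have hsum0 := hsum 0
  rw [filter_lt_eq_Ioi, Fin.sum_Ioi_zero, htop] at hsum0
  have hslack : ¬ (ℓ 0 + 1 < ρ (f 0) ∧
      (ℓ 0 : ℤ) + 1 + 2 * ∑ i : Fin t, (ℓ i.succ : ℤ) ≤ n - ρ (f 0)) := by
    rintro ⟨hgap1, hsum1⟩
    have hbump := hmax _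
      (isSFY_add_single_head ρ hf hbot hlt_top hℓ hgap hsum hgap1 (htop ▸ hsum1)) le_self_add
    exact one_ne_zero (Finsupp.single_eq_zero.mp (add_eq_left.mp hbump))
  push_cast
  omega

/-- Let `P` be a finite bounded ranked poset of rank `n` and let `m` be a
maximal monomial of `SFY`. Write `m = x_p^ℓ ⬝ m'` where `p` is the minimal element of the
support of `m` (of rank `k = ρ p`, with `ℓ = m p`) and `m'` has degree `r = deg m - ℓ`,
supported on elements strictly greater than `p`. Then `ℓ = min(n - k - 2r, k - 1)`. -/
theorem stmt19 {P : Type} [Fintype P] [PartialOrder P] [BoundedOrder P]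
    (n : ℕ) (ρ : P → ℕ)
    (hcov : ∀ x y : P, x ⋖ y → ρ y = ρ x + 1)
    (hbot : ρ ⊥ = 0) (htop : ρ ⊤ = n)
    (m : P →₀ ℕ) (hm : IsSFY ρ m)
    (hmax : ∀ m' : P →₀ ℕ, IsSFY ρ m' → m ≤ m' → m' = m)
    (p : P) (hp : p ∈ m.support)
    (hmin : ∀ q ∈ m.support, q ≠ p → p < q) :
    (m p : ℤ) = min ((n : ℤ) - (ρ p : ℤ) - 2 * ((mdeg m : ℤ) - (m p : ℤ)))
      ((ρ p : ℤ) - 1) :=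
  stmt19_general n ρ htop m hm hmax p hp hmin
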